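/- arXiv:2404.00666 — 11 statements merged into one kernel-verified Lean document; each statement's English description precedes it below -/
import Mathlib

section
/- Let $s_0, s_1, \dots, s_t$ be a non-decreasing sequence of positive real numbers, and define $a_k = \sum_{i=0}^{k} s_i / s_k$. Then $s_t a_t^2 \le 2 \sum_{k=0}^{t} s_k a_k$. -/
theorem stmt0 (t : ℕ) (s : ℕ → ℝ) (hpos : ∀ i, 0 < s i)
    (hmono : ∀ i j, i ≤ j → s i ≤ s j)
    (a : ℕ → ℝ) (ha : ∀ k, a k = (∑ i ∈ Finset.range (k + 1), s i) / s k) :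
    s t * (a t) ^ 2 ≤ 2 * ∑ k ∈ Finset.range (t + 1), s k * a k := by
  set S : ℕ → ℝ := fun k => ∑ i ∈ Finset.range (k + 1), s i with hS
  have hSpos : ∀ k, 0 < S k := by
    intro k
    apply Finset.sum_pos (fun i _ => hpos i)
    exact ⟨0, Finset.mem_range.2 (Nat.succ_pos k)⟩
  have hsa : ∀ k, s k * a k = S k := by
    intro k
    rw [ha k]
    simp only [hS]
    rw [mul_comm]
    exact div_mul_cancel₀ _ (hpos k).ne'
  have key : ∀ n, (S n) ^ 2 ≤ 2 * s n * ∑ k ∈ Finset.range (n + 1), S k := by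
    intro n
    induction n with
    | zero =>
      simp [hS]
      nlinarith [hpos 0]
    | succ n ih =>
      have hS1 : S (n + 1) = S n + s (n + 1) := by
        simp [hS, Finset.sum_range_succ]
      have hsum : ∑ k ∈ Finset.range (n + 2), S k
          = (∑ k ∈ Finset.range (n + 1), S k) + S (n + 1) := by
        rw [Finset.sum_range_succ]
      have hmon : s n ≤ s (n + 1) := hmono n (n + 1) (Nat.le_succ n)
      have hsumpos : 0 ≤ ∑ k ∈ Finset.range (n + 1), S k :=
        Finset.sum_nonneg fun k _ => (hSpos k).le
      nlinarith [hSpos n, hpos (n + 1), hSpos (n + 1)]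
  have hst := hpos t
  have h2 : s t * (a t) ^ 2 = (S t) ^ 2 / s t := by
    rw [ha t]
    field_simp
    ring
  calc s t * (a t) ^ 2 = (S t) ^ 2 / s t := h2
    _ ≤ 2 * ∑ k ∈ Finset.range (t + 1), S k := by
        rw [div_le_iff₀ hst]
        calc (S t) ^ 2 ≤ 2 * s t * ∑ k ∈ Finset.range (t + 1), S k := key t
          _ = 2 * (∑ k ∈ Finset.range (t + 1), S k) * s t := by ring
    _ = 2 * ∑ k ∈ Finset.range (t + 1), s k * a k := by
        congr 1
        exact Finset.sum_congr rfl fun k _ => (hsa k).symm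
end

section
/- For any positive real numbers $c_1, c_2$, any natural number $t$, and any sequence of non-negative real numbers $B_0, B_1, \dots, B_t$, we have $c_1 \sqrt{\sum_{k=0}^{t} B_k^2} - \sum_{k=0}^{t} \frac{B_k^2}{c_2} \sqrt{\sum_{j=0}^{k} B_j^2} \le 2 c_1^{3/2} c_2^{1/2}$. -/
lemma key_tele (t : ℕ) (a : ℕ → ℝ) (ha : ∀ k, 0 ≤ a k) :
    (2/3) * (∑ k ∈ Finset.range (t+1), a k) *
        Real.sqrt (∑ k ∈ Finset.range (t+1), a k)
      ≤ ∑ k ∈ Finset.range (t+1), a k * Real.sqrt (∑ j ∈ Finset.range (k+1), a j) := by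
  induction t with
  | zero =>
      simp only [zero_add, Finset.sum_range_one]
      nlinarith [Real.sqrt_nonneg (a 0), ha 0]
  | succ n ih =>
      rw [Finset.sum_range_succ (fun k => a k * _), Finset.sum_range_succ a]
      set S := ∑ k ∈ Finset.range (n+1), a k with hS
      have hSnn : 0 ≤ S := Finset.sum_nonneg fun i _ => ha i
      have hS'nn : 0 ≤ S + a (n+1) := by linarith [ha (n+1)]
      set u := Real.sqrt (S + a (n+1)) with hu
      set v := Real.sqrt S with hv
      have hu2 : u ^ 2 = S + a (n+1) := Real.sq_sqrt hS'nn
      have hv2 : v ^ 2 = S := Real.sq_sqrt hSnn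
      have hun : 0 ≤ u := Real.sqrt_nonneg _
      have hvn : 0 ≤ v := Real.sqrt_nonneg _
      have : (2/3) * (S + a (n+1)) * u ≤ (2/3) * S * v + a (n+1) * u := by
        nlinarith [sq_nonneg (u - v), mul_nonneg (sq_nonneg (u - v)) (add_nonneg hun (add_nonneg hvn hvn))]
      linarith

theorem stmt2 (c₁ c₂ : ℝ) (hc₁ : 0 < c₁) (hc₂ : 0 < c₂) (t : ℕ)
    (B : ℕ → ℝ) (hB : ∀ k, 0 ≤ B k) :
    c₁ * Real.sqrt (∑ k ∈ Finset.range (t + 1), (B k) ^ 2)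
      - ∑ k ∈ Finset.range (t + 1),
          (B k) ^ 2 / c₂ * Real.sqrt (∑ j ∈ Finset.range (k + 1), (B j) ^ 2)
      ≤ 2 * (c₁ * Real.sqrt c₁) * Real.sqrt c₂ := by
  set S := ∑ k ∈ Finset.range (t + 1), (B k) ^ 2 with hS
  have hSnn : 0 ≤ S := Finset.sum_nonneg fun i _ => sq_nonneg _
  have hsum_nn : 0 ≤ ∑ k ∈ Finset.range (t + 1),
      (B k) ^ 2 / c₂ * Real.sqrt (∑ j ∈ Finset.range (k + 1), (B j) ^ 2) := by
    refine Finset.sum_nonneg fun i _ => mul_nonneg ?_ (Real.sqrt_nonneg _)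
    positivity
  have htele : (2/3) * S * Real.sqrt S
      ≤ ∑ k ∈ Finset.range (t+1), (B k) ^ 2 * Real.sqrt (∑ j ∈ Finset.range (k+1), (B j) ^ 2) :=
    key_tele t (fun k => (B k) ^ 2) (fun k => sq_nonneg _)
  have hsum_eq : ∑ k ∈ Finset.range (t + 1),
      (B k) ^ 2 / c₂ * Real.sqrt (∑ j ∈ Finset.range (k + 1), (B j) ^ 2)
      = (1/c₂) * ∑ k ∈ Finset.range (t+1),
          (B k) ^ 2 * Real.sqrt (∑ j ∈ Finset.range (k+1), (B j) ^ 2) := by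
    rw [Finset.mul_sum]; congr 1; ext k; ring
  by_cases hcase : S ≤ 4 * c₁ * c₂
  · have h1 : Real.sqrt S ≤ Real.sqrt (4 * c₁ * c₂) := Real.sqrt_le_sqrt hcase
    have h2 : Real.sqrt (4 * c₁ * c₂) = 2 * Real.sqrt c₁ * Real.sqrt c₂ := by
      rw [show (4 : ℝ) * c₁ * c₂ = (2 * Real.sqrt c₁ * Real.sqrt c₂) ^ 2 by
        rw [mul_pow, mul_pow, Real.sq_sqrt hc₁.le, Real.sq_sqrt hc₂.le]; ring]
      exact Real.sqrt_sq (by positivity)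
    have : c₁ * Real.sqrt S ≤ 2 * (c₁ * Real.sqrt c₁) * Real.sqrt c₂ := by
      calc c₁ * Real.sqrt S ≤ c₁ * (2 * Real.sqrt c₁ * Real.sqrt c₂) := by
            rw [← h2]; exact mul_le_mul_of_nonneg_left h1 hc₁.le
        _ = 2 * (c₁ * Real.sqrt c₁) * Real.sqrt c₂ := by ring
    linarith
  · push_neg at hcase
    have hsqS : 0 ≤ Real.sqrt S := Real.sqrt_nonneg _
    have h3 : c₁ * Real.sqrt S ≤ (1/c₂) * ((2/3) * S * Real.sqrt S) := by
      rw [show (1/c₂) * ((2/3) * S * Real.sqrt S) = ((2/3) * (S / c₂)) * Real.sqrt S by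
        ring]
      apply mul_le_mul_of_nonneg_right _ hsqS
      have : 4 * c₁ < S / c₂ := (lt_div_iff₀ hc₂).mpr (by linarith)
      linarith
    have h4 : (1/c₂) * ((2/3) * S * Real.sqrt S) ≤ ∑ k ∈ Finset.range (t + 1),
        (B k) ^ 2 / c₂ * Real.sqrt (∑ j ∈ Finset.range (k + 1), (B j) ^ 2) := by
      rw [hsum_eq]
      exact mul_le_mul_of_nonneg_left htele (by positivity)
    have hrhs : 0 ≤ 2 * (c₁ * Real.sqrt c₁) * Real.sqrt c₂ := by positivity
    linarith
end

section
/- For any natural number $k$ and any sequence of non-negative real numbers $s_0, s_1, \dots, s_k$ with all partial sums positive, the following holds: $\sqrt{\sum_{i=0}^{k} s_i} \le \sum_{i=0}^{k} \frac{s_i}{\sqrt{\sum_{j=0}^{i} s_j}} \le 2\sqrt{\sum_{i=0}^{k} s_i}$. -/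
lemma aux_sqrt_bounds (a b : ℝ) (ha : 0 ≤ a) (hab : a ≤ b) (hb : 0 < b) :
    Real.sqrt b - Real.sqrt a ≤ (b - a) / Real.sqrt b ∧
    (b - a) / Real.sqrt b ≤ 2 * (Real.sqrt b - Real.sqrt a) := by
  have hu : 0 ≤ Real.sqrt a := Real.sqrt_nonneg a
  have hv : 0 < Real.sqrt b := Real.sqrt_pos.2 hb
  have huv : Real.sqrt a ≤ Real.sqrt b := Real.sqrt_le_sqrt hab
  have ha2 : Real.sqrt a * Real.sqrt a = a := Real.mul_self_sqrt ha
  have hb2 : Real.sqrt b * Real.sqrt b = b := Real.mul_self_sqrt hb.le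
  constructor
  · rw [le_div_iff₀ hv]; nlinarith
  · rw [div_le_iff₀ hv]; nlinarith

theorem stmt3 (k : ℕ) (s : ℕ → ℝ) (hs : ∀ i, 0 ≤ s i)
    (hpos : ∀ i ≤ k, 0 < ∑ j ∈ Finset.range (i + 1), s j) :
    Real.sqrt (∑ i ∈ Finset.range (k + 1), s i)
        ≤ ∑ i ∈ Finset.range (k + 1), s i / Real.sqrt (∑ j ∈ Finset.range (i + 1), s j)
      ∧ ∑ i ∈ Finset.range (k + 1), s i / Real.sqrt (∑ j ∈ Finset.range (i + 1), s j)
        ≤ 2 * Real.sqrt (∑ i ∈ Finset.range (k + 1), s i) := by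
  induction k with
  | zero =>
    have h0 : 0 < s 0 := by simpa using hpos 0 le_rfl
    simp only [zero_add, Finset.sum_range_one]
    have hv : 0 < Real.sqrt (s 0) := Real.sqrt_pos.2 h0
    have heq : s 0 / Real.sqrt (s 0) = Real.sqrt (s 0) := by
      rw [eq_comm, eq_div_iff hv.ne', Real.mul_self_sqrt h0.le]
    rw [heq]
    constructor
    · exact le_rfl
    · nlinarith
  | succ n ih =>
    have IH := ih (fun i hi => hpos i (hi.trans (Nat.le_succ n)))
    set A := ∑ j ∈ Finset.range (n + 1), s j with hAdef
    have hA : 0 < A := hpos n (Nat.le_succ n)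
    have hB : 0 < ∑ j ∈ Finset.range (n + 2), s j := hpos (n + 1) le_rfl
    have hBA : ∑ j ∈ Finset.range (n + 2), s j = A + s (n + 1) := by
      rw [Finset.sum_range_succ]
    have hAB : A ≤ ∑ j ∈ Finset.range (n + 2), s j := by
      rw [hBA]; linarith [hs (n + 1)]
    have key := aux_sqrt_bounds A (∑ j ∈ Finset.range (n + 2), s j) hA.le hAB hB
    have hsub : (∑ j ∈ Finset.range (n + 2), s j) - A = s (n + 1) := by
      rw [hBA]; ring
    rw [hsub] at key
    rw [show n + 1 + 1 = n + 2 from rfl, Finset.sum_range_succ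
      (fun i => s i / Real.sqrt (∑ j ∈ Finset.range (i + 1), s j)) (n + 1)]
    have hmono : Real.sqrt A ≤ Real.sqrt (∑ j ∈ Finset.range (n + 2), s j) :=
      Real.sqrt_le_sqrt hAB
    constructor
    · linarith [IH.1, key.1]
    · linarith [IH.2, key.2]
end

section
/- Let $s_0, s_1, \dots, s_T$ be a positive non-decreasing sequence of real numbers. Then $\max_{t \le T} \sum_{i < t} \frac{s_i}{s_t} \ge \frac{1}{e}\left(\frac{T}{1 + \log(s_T/s_0)} - 1\right)$. -/
theorem stmt4 (T : ℕ) (s : ℕ → ℝ) (hpos : ∀ i, 0 < s i)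
    (hmono : ∀ i j, i ≤ j → s i ≤ s j) :
    ∃ t ≤ T,
      (1 / Real.exp 1) * ((T : ℝ) / (1 + Real.log (s T / s 0)) - 1)
        ≤ ∑ i ∈ Finset.range t, s i / s t := by
  set L := Real.log (s T / s 0) with hLdef
  have hs0 : 0 < s 0 := hpos 0
  have hL0 : 0 ≤ L := Real.log_nonneg (by
    rw [le_div_iff₀ hs0]; simpa using hmono 0 T (Nat.zero_le T))
  have h1L : 0 < 1 + L := by linarith
  have hexp : (0:ℝ) < Real.exp 1 := Real.exp_pos 1
  by_cases hT : (T : ℝ) / (1 + L) ≤ 1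
  · refine ⟨0, Nat.zero_le T, ?_⟩
    simp only [Finset.range_zero, Finset.sum_empty]
    have h2 : (T:ℝ)/(1+L) - 1 ≤ 0 := by linarith
    have h3 : (0:ℝ) < 1 / Real.exp 1 := by positivity
    nlinarith
  push_neg at hT
  have hT1 : 1 ≤ T := by
    by_contra h
    push_neg at h
    interval_cases T
    · simp at hT; linarith
  set K : ℕ := ⌊L⌋₊ + 1 with hK
  have hKL : (K : ℝ) ≤ 1 + L := by
    have := Nat.floor_le hL0
    push_cast [hK]
    linarith
  have hKpos : 0 < K := Nat.succ_pos _
  set f : ℕ → ℕ := fun i => ⌊Real.log (s i / s 0)⌋₊ with hf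
  have hmaps : ∀ i ∈ Finset.range T, f i ∈ Finset.range K := by
    intro i hi
    simp only [Finset.mem_range] at hi ⊢
    have h1 : Real.log (s i / s 0) ≤ L := by
      apply Real.log_le_log (div_pos (hpos i) hs0)
      rw [div_le_div_iff₀ hs0 hs0]
      exact mul_le_mul_of_nonneg_right (hmono i T (le_of_lt hi)) (le_of_lt hs0)
    have := Nat.floor_le_floor h1
    simp only [hf]
    omega
  obtain ⟨y, _, hcard⟩ := Finset.exists_lt_card_fiber_of_mul_lt_card_of_maps_to
    (n := (T - 1) / K) hmaps
    (by
      rw [Finset.card_range, Finset.card_range]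
      have h := Nat.div_mul_le_self (T-1) K
      rw [mul_comm]
      omega)
  set B := (Finset.range T).filter (fun i => f i = y) with hB
  set m := B.card with hm
  have hTm : T ≤ m * K := by
    have h1 : T - 1 < m * K := (Nat.div_lt_iff_lt_mul hKpos).mp hcard
    omega
  have hne : B.Nonempty := Finset.card_pos.mp (lt_of_le_of_lt (Nat.zero_le _) hcard)
  set t := B.max' hne with ht
  have htB : t ∈ B := B.max'_mem hne
  have htT : t < T := by
    have := (Finset.mem_filter.mp htB).1
    simpa [Finset.mem_range] using this
  have htf : f t = y := (Finset.mem_filter.mp htB).2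
  refine ⟨t, le_of_lt htT, ?_⟩
  -- per-element lower bound
  have hterm : ∀ i ∈ B, 1 / Real.exp 1 ≤ s i / s t := by
    intro i hiB
    have hif : f i = y := (Finset.mem_filter.mp hiB).2
    have hxi : (y:ℝ) ≤ Real.log (s i / s 0) := by
      rw [← hif]
      exact Nat.floor_le (Real.log_nonneg (by
        rw [le_div_iff₀ hs0]; simpa using hmono 0 i (Nat.zero_le i)))
    have hxt : Real.log (s t / s 0) < (y:ℝ) + 1 := by
      have htf' : ⌊Real.log (s t / s 0)⌋₊ = y := htf
      have := Nat.lt_floor_add_one (Real.log (s t / s 0))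
      rw [htf'] at this; exact_mod_cast this
    have hlog : (-1:ℝ) < Real.log (s i / s t) := by
      rw [Real.log_div (ne_of_gt (hpos i)) (ne_of_gt (hpos t))]
      rw [Real.log_div (ne_of_gt (hpos i)) (ne_of_gt hs0)] at hxi
      rw [Real.log_div (ne_of_gt (hpos t)) (ne_of_gt hs0)] at hxt
      linarith
    have h1 : Real.exp (-1) ≤ Real.exp (Real.log (s i / s t)) :=
      Real.exp_le_exp.mpr (le_of_lt hlog)
    rw [Real.exp_log (div_pos (hpos i) (hpos t))] at h1
    rw [Real.exp_neg] at h1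
    rw [one_div]
    exact h1
  set B' := B.erase t with hB'
  have hB'sub : B' ⊆ Finset.range t := by
    intro i hi
    rw [Finset.mem_range]
    have hne' := Finset.ne_of_mem_erase hi
    have hle := B.le_max' i (Finset.mem_of_mem_erase hi)
    omega
  have hsum1 : ∑ i ∈ B', s i / s t ≤ ∑ i ∈ Finset.range t, s i / s t := by
    apply Finset.sum_le_sum_of_subset_of_nonneg hB'sub
    intro i _ _
    exact le_of_lt (div_pos (hpos i) (hpos t))
  have hsum2 : (B'.card : ℝ) * (1 / Real.exp 1) ≤ ∑ i ∈ B', s i / s t := by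
    have := Finset.card_nsmul_le_sum B' (fun i => s i / s t) (1 / Real.exp 1)
      (fun i hi => hterm i (Finset.mem_of_mem_erase hi))
    simpa [nsmul_eq_mul] using this
  have hcardB' : B'.card = m - 1 := by
    rw [hB', Finset.card_erase_of_mem htB]
  have hm1 : 1 ≤ m := Finset.card_pos.mpr hne
  have hkey : (T:ℝ) / (1 + L) ≤ (m:ℝ) := by
    rw [div_le_iff₀ h1L]
    have h1 : (T:ℝ) ≤ (m:ℝ) * (K:ℝ) := by exact_mod_cast hTm
    have h2 : (m:ℝ) * (K:ℝ) ≤ (m:ℝ) * (1 + L) := by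
      exact mul_le_mul_of_nonneg_left hKL (Nat.cast_nonneg m)
    linarith
  have hfinal : (1 / Real.exp 1) * ((T : ℝ) / (1 + L) - 1)
      ≤ ((m:ℝ) - 1) * (1 / Real.exp 1) := by
    rw [mul_comm]
    apply mul_le_mul_of_nonneg_right (by linarith) (by positivity)
  have hcast : ((m - 1 : ℕ) : ℝ) = (m:ℝ) - 1 := by
    have : (1:ℕ) ≤ m := hm1
    push_cast [this]
    ring
  calc (1 / Real.exp 1) * ((T : ℝ) / (1 + L) - 1)
      ≤ ((m:ℝ) - 1) * (1 / Real.exp 1) := hfinal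
    _ = (B'.card : ℝ) * (1 / Real.exp 1) := by rw [hcardB', hcast]
    _ ≤ ∑ i ∈ B', s i / s t := hsum2
    _ ≤ ∑ i ∈ Finset.range t, s i / s t := hsum1
end

section
/- Let $a_{-1}, a_0, a_1, \dots, a_t$ be a non-decreasing sequence of positive real numbers. Then $\sum_{k=0}^{t} \frac{a_k - a_{k-1}}{a_k (1 + \log(a_k/a_{-1}))^2} \le 1$. -/
/-- Here `a 0` plays the role of `a₋₁` and `a (k+1)` the role of `a_k`. -/
theorem stmt5 (t : ℕ) (a : ℕ → ℝ) (hpos : ∀ k, 0 < a k)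
    (hmono : ∀ i j, i ≤ j → a i ≤ a j) :
    ∑ k ∈ Finset.range (t + 1),
        (a (k + 1) - a k) / (a (k + 1) * (1 + Real.log (a (k + 1) / a 0)) ^ 2) ≤ 1 := by
  set b : ℕ → ℝ := fun k => 1 / (1 + Real.log (a k / a 0)) with hb
  have hL : ∀ k, 0 ≤ Real.log (a k / a 0) := fun k =>
    Real.log_nonneg ((one_le_div (hpos 0)).2 (hmono 0 k (Nat.zero_le k)))
  have hD : ∀ k, 0 < 1 + Real.log (a k / a 0) := fun k => by linarith [hL k]
  have key : ∀ k, (a (k + 1) - a k) / (a (k + 1) * (1 + Real.log (a (k + 1) / a 0)) ^ 2)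
      ≤ b k - b (k + 1) := by
    intro k
    have hpk := hpos k
    have hpk1 := hpos (k + 1)
    have hle : a k ≤ a (k + 1) := hmono k (k + 1) (Nat.le_succ k)
    have hlog : (a (k + 1) - a k) / a (k + 1) ≤ Real.log (a (k + 1)) - Real.log (a k) := by
      have h := Real.log_le_sub_one_of_pos (show 0 < a k / a (k + 1) by positivity)
      rw [Real.log_div hpk.ne' hpk1.ne'] at h
      have : a k / a (k + 1) - 1 = -((a (k + 1) - a k) / a (k + 1)) := by
        field_simp
        ring
      linarith
    have hdiff : b k - b (k + 1) =
        (Real.log (a (k + 1)) - Real.log (a k)) /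
          ((1 + Real.log (a k / a 0)) * (1 + Real.log (a (k + 1) / a 0))) := by
      simp only [hb]
      rw [Real.log_div hpk1.ne' (hpos 0).ne', Real.log_div hpk.ne' (hpos 0).ne']
      have h1 := hD k
      have h2 := hD (k + 1)
      rw [Real.log_div hpk.ne' (hpos 0).ne'] at h1
      rw [Real.log_div hpk1.ne' (hpos 0).ne'] at h2
      field_simp
      ring
    rw [hdiff, show a (k + 1) * (1 + Real.log (a (k + 1) / a 0)) ^ 2
        = a (k + 1) * (1 + Real.log (a (k + 1) / a 0)) ^ 2 from rfl, ← div_div]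
    have hLle : Real.log (a k / a 0) ≤ Real.log (a (k + 1) / a 0) :=
      Real.log_le_log (div_pos hpk (hpos 0)) (by gcongr; exact (hpos 0).le)
    have hY : 0 ≤ Real.log (a (k + 1)) - Real.log (a k) := by
      have := Real.log_le_log hpk hle
      linarith
    apply div_le_div₀ hY hlog (mul_pos (hD k) (hD (k + 1)))
    nlinarith [hD k, hD (k + 1)]
  calc ∑ k ∈ Finset.range (t + 1),
        (a (k + 1) - a k) / (a (k + 1) * (1 + Real.log (a (k + 1) / a 0)) ^ 2)
      ≤ ∑ k ∈ Finset.range (t + 1), (b k - b (k + 1)) :=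
        Finset.sum_le_sum fun k _ => key k
    _ = b 0 - b (t + 1) := Finset.sum_range_sub' b (t + 1)
    _ ≤ 1 := by
        have hb0 : b 0 = 1 := by
          simp [hb, Real.log_div (hpos 0).ne' (hpos 0).ne']
        have : 0 < b (t + 1) := by
          simp only [hb]
          exact div_pos one_pos (hD (t + 1))
        linarith
end

section
/- Let $f$ be a convex function on a convex set $K$ in a real vector space with minimizer $x^*$, and let $g_t = \nabla f(\bar x_t)$ where, for positive weights $w_0, w_1, \dots$, $\bar x_t = \frac{\sum_{k=0}^{t} w_k x_{k+1}}{\sum_{k=0}^{t} w_k}$ for a sequence of points $x_1, x_2, \dots \in K$. Then for any $T > 0$, $f(\bar x_{T-1}) - f(x^*) \le \frac{1}{\sum_{t=0}^{T-1} w_t} \sum_{t=0}^{T-1} w_t \langle g_t, x_{t+1} - x^* \rangle$. -/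
open scoped RealInnerProductSpace

theorem stmt7 {E : Type*} [NormedAddCommGroup E] [InnerProductSpace ℝ E]
    (K : Set E) (hK : Convex ℝ K) (f : E → ℝ)
    (xstar : E) (hxstar : xstar ∈ K) (hmin : ∀ u ∈ K, f xstar ≤ f u)
    (w : ℕ → ℝ) (hw : ∀ k, 0 < w k)
    (x : ℕ → E) (hx : ∀ k, x (k + 1) ∈ K)
    (xbar : ℕ → E)
    (hxbar : ∀ t, xbar t =
      (∑ k ∈ Finset.range (t + 1), w k)⁻¹ • ∑ k ∈ Finset.range (t + 1), w k • x (k + 1))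
    (g : ℕ → E)
    (hsub : ∀ t, ∀ u ∈ K, f (xbar t) + ⟪g t, u - xbar t⟫ ≤ f u)
    (T : ℕ) (hT : 0 < T) :
    f (xbar (T - 1)) - f xstar ≤
      (∑ t ∈ Finset.range T, w t)⁻¹ *
        ∑ t ∈ Finset.range T, w t * ⟪g t, x (t + 1) - xstar⟫ := by
  obtain ⟨n, rfl⟩ : ∃ n, T = n + 1 := ⟨T - 1, (Nat.succ_pred_eq_of_pos hT).symm⟩
  simp only [Nat.add_sub_cancel]
  have hWpos : ∀ t, 0 < ∑ k ∈ Finset.range (t + 1), w k := fun t =>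
    Finset.sum_pos (fun k _ => hw k) Finset.nonempty_range_add_one
  have hmem : ∀ t, xbar t ∈ K := by
    intro t
    rw [hxbar, Finset.smul_sum]
    simp_rw [smul_smul]
    refine hK.sum_mem (fun k _ => mul_nonneg (inv_nonneg.2 (hWpos t).le) (hw k).le) ?_
      (fun k _ => hx k)
    rw [← Finset.mul_sum]
    exact inv_mul_cancel₀ (hWpos t).ne'
  have hkey : ∀ t, (∑ k ∈ Finset.range (t + 1), w k) • xbar t
      = ∑ k ∈ Finset.range (t + 1), w k • x (k + 1) := by
    intro t
    rw [hxbar, smul_smul, mul_inv_cancel₀ (hWpos t).ne', one_smul]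
  have main : ∀ t, (∑ k ∈ Finset.range (t + 1), w k) * (f (xbar t) - f xstar)
      ≤ ∑ k ∈ Finset.range (t + 1), w k * ⟪g k, x (k + 1) - xstar⟫ := by
    intro t
    induction t with
    | zero =>
      have h := hsub 0 xstar hxstar
      have hx0 : xbar 0 = x 1 := by
        rw [hxbar]
        simp [smul_smul, inv_mul_cancel₀ (hw 0).ne']
      rw [hx0] at h
      have hneg : ⟪g 0, xstar - x 1⟫ = -⟪g 0, x 1 - xstar⟫ := by
        rw [← inner_neg_right, neg_sub]
      rw [hneg] at h
      simp only [zero_add, Finset.range_one, Finset.sum_singleton, hx0]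
      nlinarith [mul_le_mul_of_nonneg_left (by linarith : f (x 1) - f xstar ≤ ⟪g 0, x 1 - xstar⟫) (hw 0).le]
    | succ t ih =>
      have h1 := hsub (t + 1) (xbar t) (hmem t)
      have h2 := hsub (t + 1) xstar hxstar
      have e2 : ∑ k ∈ Finset.range (t + 1 + 1), w k
          = (∑ k ∈ Finset.range (t + 1), w k) + w (t + 1) := Finset.sum_range_succ _ _
      have hvec : (∑ k ∈ Finset.range (t + 1), w k) • (xbar (t + 1) - xbar t)
          + w (t + 1) • (xbar (t + 1) - xstar) = w (t + 1) • (x (t + 1 + 1) - xstar) := by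
        have e1 : (∑ k ∈ Finset.range (t + 1 + 1), w k) • xbar (t + 1)
            = (∑ k ∈ Finset.range (t + 1), w k) • xbar t + w (t + 1) • x (t + 1 + 1) := by
          rw [hkey, hkey, Finset.sum_range_succ]
        rw [e2, add_smul] at e1
        have expand : (∑ k ∈ Finset.range (t + 1), w k) • (xbar (t + 1) - xbar t)
            + w (t + 1) • (xbar (t + 1) - xstar)
            = ((∑ k ∈ Finset.range (t + 1), w k) • xbar (t + 1) + w (t + 1) • xbar (t + 1))
              - (∑ k ∈ Finset.range (t + 1), w k) • xbar t - w (t + 1) • xstar := by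
          simp only [smul_sub]; abel
        rw [expand, e1, smul_sub]
        abel
      have hinner : (∑ k ∈ Finset.range (t + 1), w k) * ⟪g (t + 1), xbar (t + 1) - xbar t⟫
          + w (t + 1) * ⟪g (t + 1), xbar (t + 1) - xstar⟫
          = w (t + 1) * ⟪g (t + 1), x (t + 1 + 1) - xstar⟫ := by
        rw [← real_inner_smul_right, ← real_inner_smul_right, ← real_inner_smul_right,
          ← inner_add_right, hvec]
      have s1 : f (xbar (t + 1)) - f (xbar t) ≤ ⟪g (t + 1), xbar (t + 1) - xbar t⟫ := by
        have hneg : ⟪g (t + 1), xbar t - xbar (t + 1)⟫ = -⟪g (t + 1), xbar (t + 1) - xbar t⟫ := by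
          rw [← inner_neg_right, neg_sub]
        rw [hneg] at h1; linarith
      have s2 : f (xbar (t + 1)) - f xstar ≤ ⟪g (t + 1), xbar (t + 1) - xstar⟫ := by
        have hneg : ⟪g (t + 1), xstar - xbar (t + 1)⟫ = -⟪g (t + 1), xbar (t + 1) - xstar⟫ := by
          rw [← inner_neg_right, neg_sub]
        rw [hneg] at h2; linarith
      have m1 := mul_le_mul_of_nonneg_left s1 (hWpos t).le
      have m2 := mul_le_mul_of_nonneg_left s2 (hw (t + 1)).le
      have egoal : ∑ k ∈ Finset.range (t + 1 + 1), w k * ⟪g k, x (k + 1) - xstar⟫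
          = (∑ k ∈ Finset.range (t + 1), w k * ⟪g k, x (k + 1) - xstar⟫)
            + w (t + 1) * ⟪g (t + 1), x (t + 1 + 1) - xstar⟫ := Finset.sum_range_succ _ _
      rw [e2, egoal]
      nlinarith [ih, m1, m2, hinner]
  have := main n
  rw [inv_mul_eq_div, le_div_iff₀ (hWpos n), mul_comm]
  exact this
end

section
/- Let $f$ be a convex function on convex set $K$ with minimizer $x^*$, positive weights $w_0, w_1, \dots$, points $x_1, x_2, \dots \in K$, weighted averages $\bar x_t = \frac{\sum_{k=0}^{t} w_k x_{k+1}}{\sum_{k=0}^{t} w_k}$, and subgradients $g_t$ of $f$ at $\bar x_t$. Let $\tilde\eta_0 \ge \tilde\eta_1 \ge \cdots > 0$ be a non-increasing sequence of positive numbers. Then for any $T > 0$, $\sum_{t=0}^{T-1} w_t \tilde\eta_t \langle g_t, x_{t+1} - x^* \rangle \ge 0$. -/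
open scoped RealInnerProductSpace

theorem stmt8 {E : Type*} [NormedAddCommGroup E] [InnerProductSpace ℝ E]
    (K : Set E) (hK : Convex ℝ K) (f : E → ℝ)
    (xstar : E) (hxstar : xstar ∈ K) (hmin : ∀ u ∈ K, f xstar ≤ f u)
    (w : ℕ → ℝ) (hw : ∀ k, 0 < w k)
    (x : ℕ → E) (hx : ∀ k, x (k + 1) ∈ K)
    (xbar : ℕ → E)
    (hxbar : ∀ t, xbar t =
      (∑ k ∈ Finset.range (t + 1), w k)⁻¹ • ∑ k ∈ Finset.range (t + 1), w k • x (k + 1))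
    (g : ℕ → E)
    (hsub : ∀ t, ∀ u ∈ K, f (xbar t) + ⟪g t, u - xbar t⟫ ≤ f u)
    (η : ℕ → ℝ) (hηpos : ∀ t, 0 < η t) (hηanti : ∀ i j, i ≤ j → η j ≤ η i)
    (T : ℕ) (hT : 0 < T) :
    0 ≤ ∑ t ∈ Finset.range T, w t * η t * ⟪g t, x (t + 1) - xstar⟫ := by
  set S : ℕ → ℝ := fun t => ∑ k ∈ Finset.range (t + 1), w k with hS
  have hSpos : ∀ t, 0 < S t := fun t =>
    Finset.sum_pos (fun k _ => hw k) ⟨0, Finset.mem_range.mpr (Nat.succ_pos t)⟩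
  have hSsmul : ∀ t, S t • xbar t = ∑ k ∈ Finset.range (t + 1), w k • x (k + 1) := by
    intro t
    rw [hxbar t, smul_inv_smul₀ (hSpos t).ne']
  have hxbarK : ∀ t, xbar t ∈ K := by
    intro t
    have h1 : xbar t = ∑ k ∈ Finset.range (t + 1), ((S t)⁻¹ * w k) • x (k + 1) := by
      rw [hxbar t, Finset.smul_sum]
      exact Finset.sum_congr rfl fun k _ => smul_smul ((S t)⁻¹) (w k) (x (k + 1))
    rw [h1]
    refine hK.sum_mem (fun k _ => ?_) ?_ (fun k _ => hx k)
    · exact mul_nonneg (inv_nonneg.mpr (hSpos t).le) (hw k).le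
    · rw [← Finset.mul_sum]
      exact inv_mul_cancel₀ (hSpos t).ne'
  set δ : ℕ → ℝ := fun t => f (xbar t) - f xstar with hδdef
  have hδ : ∀ t, 0 ≤ δ t := fun t => sub_nonneg.mpr (hmin _ (hxbarK t))
  have hlow : ∀ t, δ t ≤ ⟪g t, xbar t - xstar⟫ := by
    intro t
    have h := hsub t xstar hxstar
    have h2 : ⟪g t, xstar - xbar t⟫ = -⟪g t, xbar t - xstar⟫ := by
      rw [inner_sub_right, inner_sub_right]; ring
    rw [h2] at h
    simp only [hδdef]
    linarith
  have hcross : ∀ t, ⟪g (t + 1), xbar t - xbar (t + 1)⟫ ≤ δ t - δ (t + 1) := by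
    intro t
    have h := hsub (t + 1) (xbar t) (hxbarK t)
    simp only [hδdef]
    linarith
  have hkey : ∀ t, S (t + 1) * δ (t + 1) - S t * δ t ≤
      w (t + 1) * ⟪g (t + 1), x (t + 2) - xstar⟫ := by
    intro t
    have hxid : w (t + 1) • x (t + 2) = S (t + 1) • xbar (t + 1) - S t • xbar t := by
      rw [hSsmul, hSsmul, Finset.sum_range_succ]
      abel
    have hid : w (t + 1) * ⟪g (t + 1), x (t + 2) - xstar⟫ =
        w (t + 1) * ⟪g (t + 1), xbar (t + 1) - xstar⟫ +
          S t * ⟪g (t + 1), xbar (t + 1) - xbar t⟫ := by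
      have hSsucc : S (t + 1) = S t + w (t + 1) := Finset.sum_range_succ _ _
      have e1 : ⟪g (t + 1), w (t + 1) • x (t + 2)⟫ =
          S (t + 1) * ⟪g (t + 1), xbar (t + 1)⟫ - S t * ⟪g (t + 1), xbar t⟫ := by
        rw [hxid, inner_sub_right, real_inner_smul_right, real_inner_smul_right]
      have e2 : w (t + 1) * ⟪g (t + 1), x (t + 2) - xstar⟫ =
          ⟪g (t + 1), w (t + 1) • x (t + 2)⟫ - w (t + 1) * ⟪g (t + 1), xstar⟫ := by
        rw [inner_sub_right, real_inner_smul_right]; ring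
      rw [e2, e1, hSsucc]
      simp only [inner_sub_right]
      ring
    have h1 : w (t + 1) * δ (t + 1) ≤ w (t + 1) * ⟪g (t + 1), xbar (t + 1) - xstar⟫ :=
      mul_le_mul_of_nonneg_left (hlow (t + 1)) (hw (t + 1)).le
    have h2 : S t * (δ (t + 1) - δ t) ≤ S t * ⟪g (t + 1), xbar (t + 1) - xbar t⟫ := by
      refine mul_le_mul_of_nonneg_left ?_ (hSpos t).le
      have := hcross t
      have hneg : ⟪g (t + 1), xbar t - xbar (t + 1)⟫ =
          -⟪g (t + 1), xbar (t + 1) - xbar t⟫ := by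
        rw [inner_sub_right, inner_sub_right]; ring
      rw [hneg] at this
      linarith
    have hSsucc : S (t + 1) = S t + w (t + 1) := Finset.sum_range_succ _ _
    rw [hid, hSsucc]
    nlinarith [hδ t, hδ (t + 1), (hSpos t).le, (hw (t + 1)).le]
  have hmain : ∀ n : ℕ, η n * (S n * δ n) ≤
      ∑ t ∈ Finset.range (n + 1), w t * η t * ⟪g t, x (t + 1) - xstar⟫ := by
    intro n
    induction n with
    | zero =>
      have hx0 : xbar 0 = x 1 := by
        rw [hxbar 0]
        simp [inv_smul_smul₀ (hw 0).ne']
      have h1 : δ 0 ≤ ⟪g 0, x 1 - xstar⟫ := hx0 ▸ hlow 0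
      have hS0 : S 0 = w 0 := by simp [hS]
      rw [Finset.sum_range_one, hS0]
      norm_num
      nlinarith [mul_le_mul_of_nonneg_left h1 (mul_nonneg (hηpos 0).le (hw 0).le)]
    | succ n ih =>
      rw [Finset.sum_range_succ]
      have h1 := hkey n
      have h2 : η (n + 1) ≤ η n := hηanti n (n + 1) (Nat.le_succ n)
      have h3 : 0 ≤ S n * δ n := mul_nonneg (hSpos n).le (hδ n)
      nlinarith [hηpos (n + 1), mul_le_mul_of_nonneg_left h1 (hηpos (n + 1)).le,
        mul_le_mul_of_nonneg_right h2 (sub_nonneg.mpr h2)]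
  obtain ⟨n, rfl⟩ : ∃ n, T = n + 1 := ⟨T - 1, (Nat.succ_pred_eq_of_pos hT).symm⟩
  have := hmain n
  have h0 : 0 ≤ η n * (S n * δ n) :=
    mul_nonneg (hηpos n).le (mul_nonneg (hSpos n).le (hδ n))
  linarith
end

section
/- Let $K$ be a closed convex set in a real Hilbert space, $t \ge 0$, $\rho_t > 0$, $\bar r_t > 0$, $\alpha_t > 0$, and $0 < \tilde\eta_{y,t} \le \tilde\eta_{x,t}$. Given $y_t, x^* \in K$ and vectors $m_t, g_t$, define $x_{t+1} = \Pi_K(y_t - \bar r_t \alpha_t \tilde\eta_{x,t} m_t)$ and $y_{t+1} = \Pi_K(y_t - \bar r_t \alpha_t \tilde\eta_{y,t} g_t)$. Then $\bar r_t \alpha_t \langle g_t, x_{t+1} - x^* \rangle \le \frac{\bar r_t^2 \alpha_t^2 \rho_t}{2}\|g_t - m_t\|^2 - \frac{1}{2\rho_t}\|x_{t+1} - y_t\|^2 + \left(\frac{1}{2\rho_t} - \frac{1}{2\tilde\eta_{x,t}}\right)(\|x_{t+1} - y_t\|^2 + \|x_{t+1} - y_{t+1}\|^2) + \frac{1}{2\tilde\eta_{y,t}}(\|y_t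 - x^*\|^2 - \|y_{t+1} - x^*\|^2)$. -/
open scoped RealInnerProductSpace

/-- Euclidean projection onto a nonempty closed convex subset of a real Hilbert space,
defined as the (unique) nearest point. -/
noncomputable def projOn {E : Type*} [NormedAddCommGroup E] [InnerProductSpace ℝ E]
    [CompleteSpace E] (K : Set E) (hne : K.Nonempty) (hcv : Convex ℝ K) (hcl : IsClosed K)
    (u : E) : E :=
  (exists_norm_eq_iInf_of_complete_convex hne hcl.isComplete hcv u).choose

lemma projOn_spec {E : Type*} [NormedAddCommGroup E] [InnerProductSpace ℝ E]
    [CompleteSpace E] (K : Set E) (hne : K.Nonempty) (hcv : Convex ℝ K) (hcl : IsClosed K)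
    (u : E) : projOn K hne hcv hcl u ∈ K ∧
      ∀ z ∈ K, ⟪u - projOn K hne hcv hcl u, z - projOn K hne hcv hcl u⟫ ≤ 0 := by
  obtain ⟨hmem, heq⟩ :=
    (exists_norm_eq_iInf_of_complete_convex hne hcl.isComplete hcv u).choose_spec
  exact ⟨hmem, (norm_eq_iInf_iff_real_inner_le_zero hcv hmem).mp heq⟩

lemma three_point {E : Type*} [NormedAddCommGroup E] [InnerProductSpace ℝ E]
    (a b c : E) : ⟪a - b, c - b⟫ = (‖b - a‖ ^ 2 + ‖b - c‖ ^ 2 - ‖a - c‖ ^ 2) / 2 := by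
  simp only [← real_inner_self_eq_norm_sq, inner_sub_left, inner_sub_right]
  have h1 : ⟪a, b⟫ = ⟪b, a⟫ := real_inner_comm b a
  have h2 : ⟪a, c⟫ = ⟪c, a⟫ := real_inner_comm c a
  have h3 : ⟪b, c⟫ = ⟪c, b⟫ := real_inner_comm c b
  linarith

theorem stmt10 {E : Type*} [NormedAddCommGroup E] [InnerProductSpace ℝ E] [CompleteSpace E]
    (K : Set E) (hne : K.Nonempty) (hcv : Convex ℝ K) (hcl : IsClosed K)
    (ρ rbar α ηx ηy : ℝ) (hρ : 0 < ρ) (hrbar : 0 < rbar) (hα : 0 < α)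
    (hηy : 0 < ηy) (hyx : ηy ≤ ηx)
    (y xstar : E) (hy : y ∈ K) (hxstar : xstar ∈ K)
    (m g : E) (x₁ y₁ : E)
    (hx₁ : x₁ = projOn K hne hcv hcl (y - (rbar * α * ηx) • m))
    (hy₁ : y₁ = projOn K hne hcv hcl (y - (rbar * α * ηy) • g)) :
    rbar * α * ⟪g, x₁ - xstar⟫ ≤
      rbar ^ 2 * α ^ 2 * ρ / 2 * ‖g - m‖ ^ 2 - 1 / (2 * ρ) * ‖x₁ - y‖ ^ 2
        + (1 / (2 * ρ) - 1 / (2 * ηx)) * (‖x₁ - y‖ ^ 2 + ‖x₁ - y₁‖ ^ 2)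
        + 1 / (2 * ηy) * (‖y - xstar‖ ^ 2 - ‖y₁ - xstar‖ ^ 2) := by
  have hηx : 0 < ηx := lt_of_lt_of_le hηy hyx
  set r := rbar * α with hr
  have hrpos : 0 < r := mul_pos hrbar hα
  obtain ⟨hx₁K, hx₁VI⟩ := projOn_spec K hne hcv hcl (y - (rbar * α * ηx) • m)
  obtain ⟨hy₁K, hy₁VI⟩ := projOn_spec K hne hcv hcl (y - (rbar * α * ηy) • g)
  rw [← hx₁] at hx₁K hx₁VI
  rw [← hy₁] at hy₁K hy₁VI
  have h1 : ⟪y - (r * ηx) • m - x₁, y₁ - x₁⟫ ≤ 0 := hx₁VI y₁ hy₁K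
  have h2 : ⟪y - (r * ηy) • g - y₁, xstar - y₁⟫ ≤ 0 := hy₁VI xstar hxstar
  have e1 : ⟪y - (r * ηx) • m - x₁, y₁ - x₁⟫
      = ⟪y - x₁, y₁ - x₁⟫ - (r * ηx) * ⟪m, y₁ - x₁⟫ := by
    rw [sub_right_comm, inner_sub_left, real_inner_smul_left]
  have e2 : ⟪y - (r * ηy) • g - y₁, xstar - y₁⟫
      = ⟪y - y₁, xstar - y₁⟫ - (r * ηy) * ⟪g, xstar - y₁⟫ := by
    rw [sub_right_comm, inner_sub_left, real_inner_smul_left]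
  rw [e1, three_point y x₁ y₁] at h1
  rw [e2, three_point y y₁ xstar] at h2
  have hmxy : ⟪m, x₁ - y₁⟫ = -⟪m, y₁ - x₁⟫ := by
    rw [← inner_neg_right, neg_sub]
  have hgyx : ⟪g, y₁ - xstar⟫ = -⟪g, xstar - y₁⟫ := by
    rw [← inner_neg_right, neg_sub]
  have hA : r * ⟪m, x₁ - y₁⟫
      ≤ 1 / (2 * ηx) * (‖y - y₁‖ ^ 2 - ‖x₁ - y‖ ^ 2 - ‖x₁ - y₁‖ ^ 2) := by
    rw [hmxy]
    have h1'' : ‖x₁ - y‖ ^ 2 + ‖x₁ - y₁‖ ^ 2 - ‖y - y₁‖ ^ 2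
        ≤ 2 * (r * ηx) * ⟪m, y₁ - x₁⟫ := by linarith
    have hmul := mul_le_mul_of_nonneg_left h1''
      (by positivity : (0:ℝ) ≤ 1 / (2 * ηx))
    have heq : 1 / (2 * ηx) * (2 * (r * ηx) * ⟪m, y₁ - x₁⟫) = r * ⟪m, y₁ - x₁⟫ := by
      field_simp
    rw [heq] at hmul
    linarith
  have hB : r * ⟪g, y₁ - xstar⟫
      ≤ -(1 / (2 * ηy)) * (‖y₁ - y‖ ^ 2 + ‖y₁ - xstar‖ ^ 2 - ‖y - xstar‖ ^ 2) := by
    rw [hgyx]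
    have h2'' : ‖y₁ - y‖ ^ 2 + ‖y₁ - xstar‖ ^ 2 - ‖y - xstar‖ ^ 2
        ≤ 2 * (r * ηy) * ⟪g, xstar - y₁⟫ := by linarith
    have hmul := mul_le_mul_of_nonneg_left h2''
      (by positivity : (0:ℝ) ≤ 1 / (2 * ηy))
    have heq : 1 / (2 * ηy) * (2 * (r * ηy) * ⟪g, xstar - y₁⟫) = r * ⟪g, xstar - y₁⟫ := by
      field_simp
    rw [heq] at hmul
    linarith
  have hYoung : r * ⟪g - m, x₁ - y₁⟫
      ≤ r ^ 2 * ρ / 2 * ‖g - m‖ ^ 2 + 1 / (2 * ρ) * ‖x₁ - y₁‖ ^ 2 := by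
    have hexp : ‖(r * ρ) • (g - m) - (x₁ - y₁)‖ ^ 2
        = (r * ρ) ^ 2 * ‖g - m‖ ^ 2 - 2 * (r * ρ) * ⟪g - m, x₁ - y₁⟫ + ‖x₁ - y₁‖ ^ 2 := by
      rw [norm_sub_sq_real, norm_smul, real_inner_smul_left]
      simp [mul_pow, abs_of_pos (mul_pos hrpos hρ)]
      ring
    have h0 : (0:ℝ) ≤ (r * ρ) ^ 2 * ‖g - m‖ ^ 2 - 2 * (r * ρ) * ⟪g - m, x₁ - y₁⟫
        + ‖x₁ - y₁‖ ^ 2 := hexp ▸ sq_nonneg _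
    have h2ρ : (0:ℝ) < 2 * ρ := by linarith
    have key : r ^ 2 * ρ / 2 * ‖g - m‖ ^ 2 + 1 / (2 * ρ) * ‖x₁ - y₁‖ ^ 2
        - r * ⟪g - m, x₁ - y₁⟫
        = ((r * ρ) ^ 2 * ‖g - m‖ ^ 2 - 2 * (r * ρ) * ⟪g - m, x₁ - y₁⟫
          + ‖x₁ - y₁‖ ^ 2) / (2 * ρ) := by
      field_simp
      ring
    have := div_nonneg h0 h2ρ.le
    linarith [key ▸ this]
  have hdec : ⟪g, x₁ - xstar⟫ = ⟪g - m, x₁ - y₁⟫ + ⟪m, x₁ - y₁⟫ + ⟪g, y₁ - xstar⟫ := by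
    simp only [inner_sub_left, inner_sub_right]
    ring
  have hsym : ‖y₁ - y‖ ^ 2 = ‖y - y₁‖ ^ 2 := by rw [norm_sub_rev]
  have hmono : 1 / (2 * ηx) * ‖y - y₁‖ ^ 2 ≤ 1 / (2 * ηy) * ‖y - y₁‖ ^ 2 := by
    have h : 1 / (2 * ηx) ≤ 1 / (2 * ηy) := by
      apply one_div_le_one_div_of_le <;> linarith
    exact mul_le_mul_of_nonneg_right h (sq_nonneg _)
  have hr2 : r ^ 2 = rbar ^ 2 * α ^ 2 := by rw [hr]; ring
  rw [hsym] at hB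
  calc rbar * α * ⟪g, x₁ - xstar⟫
      = r * ⟪g - m, x₁ - y₁⟫ + r * ⟪m, x₁ - y₁⟫ + r * ⟪g, y₁ - xstar⟫ := by
        rw [hdec]; ring
    _ ≤ _ := by rw [← hr2]; linarith
end

section
/- Let $(s_t)_{t=0}^{T-1}$ and $(h_t)_{t=0}^{T-1}$ be non-negative non-decreasing real sequences, let $(\bar r_t)_{t=0}^{T}$ be positive with $\bar r_{t+1}/\bar r_t \le b$ for some $b > 1$ and all $t < T$, and define $\alpha_k = \sum_{i=0}^{k} \bar r_i / \bar r_k$, and let $(F_t)_{t=0}^{T-1}$ be non-negative reals. Suppose that for all $t \in \{0, \dots, T-1\}$ there exists $\kappa_t \in \{0, \dots, t\}$ such that $F_t \le \frac{\alpha_{\kappa_t} \sqrt{s_t} \sqrt{F_{\kappa_t}} + h_t}{(\sum_{k=0}^{t} \bar r_k / \bar r_{t+1})^2}$. Then for all $t \in \{0, \dots, T-1\}$: $F_t \le \frac{4 b^2 (s_t + h_t)}{(\sum_{k=0}^{t} \bar r_k / \bar r_{t+1})^2}$. -/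
lemma aux_quad (a c x : ℝ) (ha : 0 ≤ a) (hc : 0 ≤ c) (hx : 0 ≤ x)
    (h : x ^ 2 ≤ a * x + c) : x ^ 2 ≤ 4 * a ^ 2 + 2 * c := by
  nlinarith [sq_nonneg (x - 2 * a)]

theorem stmt11 (T : ℕ) (hT : 0 < T)
    (s h : ℕ → ℝ)
    (hs0 : ∀ t, 0 ≤ s t) (hh0 : ∀ t, 0 ≤ h t)
    (hsmono : ∀ i j, i ≤ j → s i ≤ s j) (hhmono : ∀ i j, i ≤ j → h i ≤ h j)
    (rbar : ℕ → ℝ) (hrbar : ∀ t, 0 < rbar t)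
    (b : ℝ) (hb : 1 < b) (hratio : ∀ t < T, rbar (t + 1) / rbar t ≤ b)
    (α : ℕ → ℝ) (hα : ∀ k, α k = (∑ i ∈ Finset.range (k + 1), rbar i) / rbar k)
    (F : ℕ → ℝ) (hF0 : ∀ t, 0 ≤ F t)
    (hyp : ∀ t < T, ∃ κ ≤ t,
      F t ≤ (α κ * Real.sqrt (s t) * Real.sqrt (F κ) + h t) /
        (∑ k ∈ Finset.range (t + 1), rbar k / rbar (t + 1)) ^ 2) :
    ∀ t < T, F t ≤ 4 * b ^ 2 * (s t + h t) /
      (∑ k ∈ Finset.range (t + 1), rbar k / rbar (t + 1)) ^ 2 := by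
  have hb0 : (0:ℝ) < b := lt_trans one_pos hb
  have hR : ∀ n, 0 < ∑ k ∈ Finset.range (n + 1), rbar k := fun n =>
    Finset.sum_pos (fun i _ => hrbar i) ⟨0, Finset.mem_range.mpr (Nat.succ_pos n)⟩
  -- D n = sum of quotients
  set D : ℕ → ℝ := fun n => ∑ k ∈ Finset.range (n + 1), rbar k / rbar (n + 1) with hDdef
  have hDeq : ∀ n, D n = (∑ k ∈ Finset.range (n + 1), rbar k) / rbar (n + 1) := fun n =>
    (Finset.sum_div _ _ _).symm
  have hDpos : ∀ n, 0 < D n := fun n => by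
    rw [hDeq]; exact div_pos (hR n) (hrbar (n + 1))
  have hαD : ∀ k, k < T → α k ≤ b * D k := by
    intro k hk
    rw [hα, hDeq]
    have h1 : (∑ i ∈ Finset.range (k + 1), rbar i) / rbar k
        = (∑ i ∈ Finset.range (k + 1), rbar i) / rbar (k + 1) * (rbar (k + 1) / rbar k) := by
      field_simp
      rw [mul_div_mul_right _ _ (hrbar (k + 1)).ne']
    rw [h1, mul_comm]
    exact mul_le_mul_of_nonneg_right (hratio k hk)
      (le_of_lt (div_pos (hR k) (hrbar (k + 1))))
  have hsh : ∀ n, (0:ℝ) ≤ s n + h n := fun n => add_nonneg (hs0 n) (hh0 n)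
  have hb2 : (1:ℝ) ≤ b ^ 2 := by nlinarith
  have hαpos : ∀ k, 0 ≤ α k := fun k => by
    rw [hα]; exact le_of_lt (div_pos (hR k) (hrbar k))
  intro t
  induction t using Nat.strong_induction_on with
  | _ t ih =>
  intro ht
  obtain ⟨κ, hκt, hineq⟩ := hyp t ht
  have hDt := hDpos t
  have hDt2 : (0:ℝ) < D t ^ 2 := by positivity
  rw [le_div_iff₀ hDt2] at hineq ⊢
  rcases eq_or_lt_of_le hκt with hκeq | hκlt
  · -- case κ = t
    subst hκeq
    have hx : 0 ≤ D κ * Real.sqrt (F κ) := by positivity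
    have hkey : (D κ * Real.sqrt (F κ)) ^ 2 ≤
        (b * Real.sqrt (s κ)) * (D κ * Real.sqrt (F κ)) + h κ := by
      have hsq : (D κ * Real.sqrt (F κ)) ^ 2 = F κ * D κ ^ 2 := by
        rw [mul_pow, Real.sq_sqrt (hF0 κ)]; ring
      rw [hsq]
      refine hineq.trans (add_le_add_left ?_ _)
      have := hαD κ ht
      calc α κ * Real.sqrt (s κ) * Real.sqrt (F κ)
          ≤ (b * D κ) * Real.sqrt (s κ) * Real.sqrt (F κ) := by
            apply mul_le_mul_of_nonneg_right (mul_le_mul_of_nonneg_right this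
              (Real.sqrt_nonneg _)) (Real.sqrt_nonneg _)
        _ = b * Real.sqrt (s κ) * (D κ * Real.sqrt (F κ)) := by ring
    have := aux_quad (b * Real.sqrt (s κ)) (h κ) (D κ * Real.sqrt (F κ))
      (by positivity) (hh0 κ) hx hkey
    have h2 : (D κ * Real.sqrt (F κ)) ^ 2 = F κ * D κ ^ 2 := by
      rw [mul_pow, Real.sq_sqrt (hF0 κ)]; ring
    have h3 : (b * Real.sqrt (s κ)) ^ 2 = b ^ 2 * s κ := by
      rw [mul_pow, Real.sq_sqrt (hs0 κ)]
    rw [h2, h3] at this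
    nlinarith [hs0 κ, hh0 κ, mul_le_mul_of_nonneg_right hb2 (hh0 κ)]
  · -- case κ < t
    have hFκ : F κ ≤ 4 * b ^ 2 * (s κ + h κ) / D κ ^ 2 := ih κ hκlt (lt_trans hκlt ht)
    have hDκ := hDpos κ
    set y : ℝ := 2 * b * Real.sqrt (s κ + h κ) / D κ with hy
    have hy0 : 0 ≤ y := div_nonneg (by positivity) hDκ.le
    have hy2 : y ^ 2 = 4 * b ^ 2 * (s κ + h κ) / D κ ^ 2 := by
      rw [hy, div_pow, mul_pow, mul_pow, Real.sq_sqrt (hsh κ)]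
      ring_nf
    have hsqF : Real.sqrt (F κ) ≤ y :=
      calc Real.sqrt (F κ) ≤ Real.sqrt (y ^ 2) := Real.sqrt_le_sqrt (by rw [hy2]; exact hFκ)
        _ = y := Real.sqrt_sq hy0
    -- bound α κ * √(s t) * √(F κ)
    have hDκb : α κ / D κ ≤ b := by
      rw [div_le_iff₀ hDκ]
      exact hαD κ (lt_trans hκlt ht)
    have hmain : α κ * Real.sqrt (s t) * Real.sqrt (F κ) ≤
        2 * b ^ 2 * Real.sqrt (s t) * Real.sqrt (s κ + h κ) := by
      calc α κ * Real.sqrt (s t) * Real.sqrt (F κ)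
          ≤ α κ * Real.sqrt (s t) * y := by
            apply mul_le_mul_of_nonneg_left hsqF (mul_nonneg (hαpos κ) (Real.sqrt_nonneg _))
        _ ≤ (b * D κ) * Real.sqrt (s t) * y := by
            apply mul_le_mul_of_nonneg_right (mul_le_mul_of_nonneg_right
              (hαD κ (lt_trans hκlt ht)) (Real.sqrt_nonneg _)) hy0
        _ = 2 * b ^ 2 * Real.sqrt (s t) * Real.sqrt (s κ + h κ) := by
            rw [hy]; field_simp
    have hprod : Real.sqrt (s t) * Real.sqrt (s κ + h κ) ≤ s t + h t := by
      have h1 : Real.sqrt (s κ + h κ) ≤ Real.sqrt (s t + h t) :=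
        Real.sqrt_le_sqrt (add_le_add (hsmono κ t (le_of_lt hκlt)) (hhmono κ t (le_of_lt hκlt)))
      have h2 : Real.sqrt (s t) ≤ Real.sqrt (s t + h t) :=
        Real.sqrt_le_sqrt (le_add_of_nonneg_right (hh0 t))
      calc Real.sqrt (s t) * Real.sqrt (s κ + h κ)
          ≤ Real.sqrt (s t + h t) * Real.sqrt (s t + h t) :=
            mul_le_mul h2 h1 (Real.sqrt_nonneg _) (Real.sqrt_nonneg _)
        _ = s t + h t := Real.mul_self_sqrt (hsh t)
    have hht : h t ≤ s t + h t := le_add_of_nonneg_left (hs0 t)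
    have hst : 0 ≤ s t + h t := hsh t
    nlinarith [hineq, hmain, hprod, mul_le_mul_of_nonneg_right hb2 hst,
      mul_le_mul_of_nonneg_left hprod (by positivity : (0:ℝ) ≤ 2 * b ^ 2)]
end

section
/- Let $c, s > 0$ and for each $k$ let $\tilde\eta_{y,k} > 0$ satisfy $\frac{1}{\tilde\eta_{y,k}} \ge c \sqrt{s + Q_k}\,(1 + \log\frac{s + Q_k}{s})$ where $Q_k = \sum_{j=0}^{k} q_j$ for non-negative reals $q_j$. Then for every $t \ge 0$: $\sum_{k=0}^{t} \tilde\eta_{y,k}^2 \, q_k \le \frac{1}{c^2}$. -/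
lemma core_aux (c B e LA LB d : ℝ) (hc : 0 < c) (hB : 0 < B) (he : 0 < e)
    (hLA1 : 1 ≤ LA) (hLALB : LA ≤ LB) (hd : 0 ≤ d)
    (h5 : d / B ≤ LB - LA)
    (hb : c * Real.sqrt B * LB ≤ 1 / e) :
    e ^ 2 * d ≤ 1 / c ^ 2 * (1 / LA - 1 / LB) := by
  have hLApos : 0 < LA := lt_of_lt_of_le one_pos hLA1
  have hLBpos : 0 < LB := lt_of_lt_of_le hLApos hLALB
  have hsqB : 0 < Real.sqrt B := Real.sqrt_pos.mpr hB
  have h1 : e * (c * Real.sqrt B * LB) ≤ 1 := by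
    have := mul_le_mul_of_nonneg_left hb he.le
    rw [mul_one_div, div_self he.ne'] at this
    linarith
  have hA2 : Real.sqrt B ^ 2 = B := Real.sq_sqrt hB.le
  have h2 : e ^ 2 * (c ^ 2 * B * LB ^ 2) ≤ 1 := by
    have hnn : 0 ≤ e * (c * Real.sqrt B * LB) := by positivity
    have hsq := mul_le_mul h1 h1 hnn zero_le_one
    have hexp : e * (c * Real.sqrt B * LB) * (e * (c * Real.sqrt B * LB)) =
        e ^ 2 * (c ^ 2 * Real.sqrt B ^ 2 * LB ^ 2) := by ring
    rw [hexp, hA2] at hsq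
    linarith
  have hden : 0 < c ^ 2 * B * LB ^ 2 := by positivity
  have h3 : e ^ 2 ≤ 1 / (c ^ 2 * B * LB ^ 2) := (le_div_iff₀ hden).mpr h2
  have e1 : 1 / LA - 1 / LB = (LB - LA) / (LA * LB) := by
    field_simp
  have main : d / (B * LB ^ 2) ≤ 1 / LA - 1 / LB := by
    rw [e1]
    calc d / (B * LB ^ 2) = (d / B) / LB ^ 2 := by rw [div_div]
      _ ≤ (LB - LA) / LB ^ 2 := by gcongr
      _ ≤ (LB - LA) / (LA * LB) := by
          apply div_le_div_of_nonneg_left (by linarith) (by positivity)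
          nlinarith
  calc e ^ 2 * d ≤ 1 / (c ^ 2 * B * LB ^ 2) * d :=
        mul_le_mul_of_nonneg_right h3 hd
    _ = 1 / c ^ 2 * (d / (B * LB ^ 2)) := by
        rw [div_mul_div_comm, one_mul, ← mul_assoc, one_div_mul_eq_div]
    _ ≤ 1 / c ^ 2 * (1 / LA - 1 / LB) :=
        mul_le_mul_of_nonneg_left main (by positivity)

lemma key_aux (c s A B e : ℝ) (hc : 0 < c) (hs : 0 < s) (hsA : s ≤ A) (hAB : A ≤ B)
    (he : 0 < e)
    (hb : c * Real.sqrt B * (1 + Real.log (B / s)) ≤ 1 / e) :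
    e ^ 2 * (B - A) ≤
      1 / c ^ 2 * (1 / (1 + Real.log (A / s)) - 1 / (1 + Real.log (B / s))) := by
  have hA : 0 < A := lt_of_lt_of_le hs hsA
  have hB : 0 < B := lt_of_lt_of_le hA hAB
  have hLA1 : 1 ≤ 1 + Real.log (A / s) := by
    have : 0 ≤ Real.log (A / s) := Real.log_nonneg (by rw [le_div_iff₀ hs]; linarith)
    linarith
  have hLALB : 1 + Real.log (A / s) ≤ 1 + Real.log (B / s) := by
    have := Real.log_le_log (div_pos hA hs) (div_le_div_of_nonneg_right hAB hs.le)
    linarith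
  have hdiff : (1 + Real.log (B / s)) - (1 + Real.log (A / s)) = Real.log (B / A) := by
    rw [Real.log_div hB.ne' hs.ne', Real.log_div hA.ne' hs.ne',
      Real.log_div hB.ne' hA.ne']
    ring
  have h5 : (B - A) / B ≤ (1 + Real.log (B / s)) - (1 + Real.log (A / s)) := by
    rw [hdiff]
    have hineq := Real.log_le_sub_one_of_pos (div_pos hA hB)
    have e2 : Real.log (A / B) = Real.log A - Real.log B :=
      Real.log_div hA.ne' hB.ne'
    have e3 : Real.log (B / A) = Real.log B - Real.log A :=
      Real.log_div hB.ne' hA.ne'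
    have e4 : (B - A) / B = 1 - A / B := by field_simp
    rw [e4, e3]; rw [e2] at hineq; linarith
  exact core_aux c B e _ _ (B - A) hc hB he hLA1 hLALB (by linarith) h5 hb

theorem stmt12 (c s : ℝ) (hc : 0 < c) (hs : 0 < s)
    (q : ℕ → ℝ) (hq : ∀ j, 0 ≤ q j)
    (η : ℕ → ℝ) (hη : ∀ k, 0 < η k)
    (hbound : ∀ k,
      c * Real.sqrt (s + ∑ j ∈ Finset.range (k + 1), q j) *
          (1 + Real.log ((s + ∑ j ∈ Finset.range (k + 1), q j) / s)) ≤ 1 / η k)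
    (t : ℕ) :
    ∑ k ∈ Finset.range (t + 1), (η k) ^ 2 * q k ≤ 1 / c ^ 2 := by
  have haS : ∀ k : ℕ, s ≤ s + ∑ j ∈ Finset.range k, q j := fun k =>
    le_add_of_nonneg_right (Finset.sum_nonneg fun j _ => hq j)
  have key : ∀ k, (η k) ^ 2 * q k ≤
      1 / c ^ 2 * (1 / (1 + Real.log ((s + ∑ j ∈ Finset.range k, q j) / s)) -
        1 / (1 + Real.log ((s + ∑ j ∈ Finset.range (k + 1), q j) / s))) := by
    intro k
    have haq : (s + ∑ j ∈ Finset.range (k + 1), q j) -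
        (s + ∑ j ∈ Finset.range k, q j) = q k := by
      rw [Finset.sum_range_succ]; ring
    have := key_aux c s (s + ∑ j ∈ Finset.range k, q j)
      (s + ∑ j ∈ Finset.range (k + 1), q j) (η k) hc hs (haS k)
      (by rw [Finset.sum_range_succ]; linarith [hq k]) (hη k) (hbound k)
    rwa [haq] at this
  have hsum : ∑ k ∈ Finset.range (t + 1), (η k) ^ 2 * q k ≤
      ∑ k ∈ Finset.range (t + 1), 1 / c ^ 2 *
        (1 / (1 + Real.log ((s + ∑ j ∈ Finset.range k, q j) / s)) -
          1 / (1 + Real.log ((s + ∑ j ∈ Finset.range (k + 1), q j) / s))) :=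
    Finset.sum_le_sum fun k _ => key k
  rw [← Finset.mul_sum,
    Finset.sum_range_sub' (fun k => 1 / (1 + Real.log ((s + ∑ j ∈ Finset.range k, q j) / s)))]
    at hsum
  have hL0 : (1 : ℝ) + Real.log ((s + ∑ j ∈ Finset.range 0, q j) / s) = 1 := by
    simp [div_self hs.ne']
  have hLt : 0 < 1 + Real.log ((s + ∑ j ∈ Finset.range (t + 1), q j) / s) := by
    have : 0 ≤ Real.log ((s + ∑ j ∈ Finset.range (t + 1), q j) / s) :=
      Real.log_nonneg (by rw [le_div_iff₀ hs]; simpa using haS (t + 1))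
    linarith
  refine hsum.trans ?_
  simp only [hL0]
  have h1 : 0 ≤ 1 / (1 + Real.log ((s + ∑ j ∈ Finset.range (t + 1), q j) / s)) := by
    positivity
  have h2 : 1 / 1 - 1 / (1 + Real.log ((s + ∑ j ∈ Finset.range (t + 1), q j) / s)) ≤ 1 := by
    norm_num; linarith
  calc 1 / c ^ 2 * (1 / 1 - 1 / (1 + Real.log ((s + ∑ j ∈ Finset.range (t + 1), q j) / s)))
      ≤ 1 / c ^ 2 * 1 := mul_le_mul_of_nonneg_left h2 (by positivity)
    _ = 1 / c ^ 2 := mul_one _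
end

section
/- Let $(a_t)_{t \ge 0}$ be a sequence of positive reals with $a_{t+1} \le a_t(1 + 2/c_t)$ where $c_t \ge c > 2$ for all $t$. If additionally each $c_t \ge h (1 + \log((s + Q_t)/s))^2$ for some $h \ge 12$, $s > 0$, and non-decreasing non-negative $Q_t$, then for all $t$, $\sum_{k=0}^{t} \frac{9 a_k^2 (Q_k - Q_{k-1})}{h^2 (s + Q_k)(1 + \log((s+Q_k)/s))^2} \le \frac{9 a_t^2}{h^2}$, where $Q_{-1} = 0$ and $(a_t)$ is non-decreasing. -/
lemma key_step (s b' b : ℝ) (hs : 0 < s) (hb' : s ≤ b') (hbb : b' ≤ b) :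
    (b - b') / (b * (1 + Real.log (b / s)) ^ 2) ≤
      1 / (1 + Real.log (b' / s)) - 1 / (1 + Real.log (b / s)) := by
  have hb'pos : 0 < b' := lt_of_lt_of_le hs hb'
  have hbpos : 0 < b := lt_of_lt_of_le hb'pos hbb
  set u' := 1 + Real.log (b' / s) with hu'def
  set u := 1 + Real.log (b / s) with hudef
  have hu'1 : 1 ≤ u' := by
    have : 0 ≤ Real.log (b' / s) := Real.log_nonneg (by rw [le_div_iff₀ hs]; linarith)
    rw [hu'def]; linarith
  have huu' : u' ≤ u := by
    have h1 : Real.log (b' / s) ≤ Real.log (b / s) :=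
      Real.log_le_log (by positivity) (div_le_div_of_nonneg_right hbb hs.le)
    rw [hu'def, hudef]; linarith
  have hu1 : 1 ≤ u := le_trans hu'1 huu'
  have hkey : b - b' ≤ b * (u - u') := by
    have hlog : Real.log (b' / b) ≤ b' / b - 1 := Real.log_le_sub_one_of_pos (by positivity)
    have hsplit : Real.log (b' / b) = Real.log (b' / s) - Real.log (b / s) := by
      rw [Real.log_div (ne_of_gt hb'pos) (ne_of_gt hbpos),
        Real.log_div (ne_of_gt hb'pos) (ne_of_gt hs),
        Real.log_div (ne_of_gt hbpos) (ne_of_gt hs)]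
      ring
    have h2 : u' - u ≤ b' / b - 1 := by rw [hu'def, hudef]; linarith [hsplit ▸ hlog]
    have hx := mul_le_mul_of_nonneg_left h2 hbpos.le
    have hy : b * (b' / b - 1) = b' - b := by field_simp
    rw [hy] at hx
    linarith
  have hrw : 1 / u' - 1 / u = (u - u') / (u' * u) := by
    field_simp
  rw [hrw, div_le_div_iff₀ (by positivity) (by positivity)]
  nlinarith [mul_le_mul_of_nonneg_right hkey (by positivity : (0:ℝ) ≤ u' * u),
    mul_le_mul_of_nonneg_left huu' (by nlinarith : (0:ℝ) ≤ b * (u - u') * u),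
    mul_nonneg (sub_nonneg.mpr hbb) (by positivity : (0:ℝ) ≤ u' * u)]

theorem stmt16 (a : ℕ → ℝ) (hapos : ∀ t, 0 < a t)
    (c h s : ℝ) (hc : 2 < c) (hh : 12 ≤ h) (hs : 0 < s)
    (ct : ℕ → ℝ) (hct_ge : ∀ t, c ≤ ct t)
    (Q : ℕ → ℝ) (hQ0 : ∀ t, 0 ≤ Q t) (hQmono : ∀ i j, i ≤ j → Q i ≤ Q j)
    (hct2 : ∀ t, h * (1 + Real.log ((s + Q t) / s)) ^ 2 ≤ ct t)
    (hrec : ∀ t, a (t + 1) ≤ a t * (1 + 2 / ct t))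
    (hamono : ∀ i j, i ≤ j → a i ≤ a j)
    (t : ℕ) :
    ∑ k ∈ Finset.range (t + 1),
        9 * (a k) ^ 2 * (Q k - (if k = 0 then 0 else Q (k - 1))) /
          (h ^ 2 * (s + Q k) * (1 + Real.log ((s + Q k) / s)) ^ 2)
      ≤ 9 * (a t) ^ 2 / h ^ 2 := by
  have hh0 : (0:ℝ) < h := by linarith
  set g : ℕ → ℝ := fun k => 1 / (1 + Real.log ((s + Q k) / s)) with hg
  have hL1 : ∀ k, 1 ≤ 1 + Real.log ((s + Q k) / s) := by
    intro k
    have : 0 ≤ Real.log ((s + Q k) / s) :=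
      Real.log_nonneg (by rw [le_div_iff₀ hs]; linarith [hQ0 k])
    linarith
  have hg01 : ∀ k, 0 < g k ∧ g k ≤ 1 := by
    intro k
    constructor
    · apply div_pos one_pos; linarith [hL1 k]
    · rw [hg]; simp only
      rw [div_le_one (by linarith [hL1 k])]; linarith [hL1 k]
  -- strengthened claim
  have main : ∀ t, ∑ k ∈ Finset.range (t + 1),
        9 * (a k) ^ 2 * (Q k - (if k = 0 then 0 else Q (k - 1))) /
          (h ^ 2 * (s + Q k) * (1 + Real.log ((s + Q k) / s)) ^ 2)
      ≤ 9 * (a t) ^ 2 / h ^ 2 * (1 - g t) := by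
    intro t
    induction t with
    | zero =>
      rw [Finset.sum_range_one]
      simp only [eq_self_iff_true, if_true, sub_zero]
      have hk := key_step s s (s + Q 0) hs le_rfl (by linarith [hQ0 0])
      have hlogss : Real.log (s / s) = 0 := by
        rw [div_self (ne_of_gt hs), Real.log_one]
      rw [hlogss] at hk
      have hgoal : Q 0 / ((s + Q 0) * (1 + Real.log ((s + Q 0) / s)) ^ 2)
          ≤ 1 - g 0 := by
        have heq : s + Q 0 - s = Q 0 := by ring
        rw [heq] at hk
        refine le_trans hk ?_
        rw [hg]; norm_num
      have h1 : 9 * (a 0) ^ 2 * Q 0 / (h ^ 2 * (s + Q 0) * (1 + Real.log ((s + Q 0) / s)) ^ 2)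
          = 9 * (a 0) ^ 2 / h ^ 2 * (Q 0 / ((s + Q 0) * (1 + Real.log ((s + Q 0) / s)) ^ 2)) := by
        rw [mul_assoc (h ^ 2), mul_div_mul_comm]
      rw [h1]
      exact mul_le_mul_of_nonneg_left hgoal (by positivity)
    | succ n ih =>
      rw [Finset.sum_range_succ]
      have hk := key_step s (s + Q n) (s + Q (n+1)) hs (by linarith [hQ0 n])
        (by linarith [hQmono n (n+1) (Nat.le_succ n)])
      have han : a n ≤ a (n + 1) := hamono n (n+1) (Nat.le_succ n)
      have h1 : 9 * (a (n+1)) ^ 2 * (Q (n+1) - (if n + 1 = 0 then 0 else Q (n + 1 - 1))) /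
            (h ^ 2 * (s + Q (n+1)) * (1 + Real.log ((s + Q (n+1)) / s)) ^ 2)
          = 9 * (a (n+1)) ^ 2 / h ^ 2 *
            ((Q (n+1) - Q n) / ((s + Q (n+1)) * (1 + Real.log ((s + Q (n+1)) / s)) ^ 2)) := by
        simp only [Nat.succ_ne_zero, if_false, Nat.add_sub_cancel]
        rw [mul_assoc (h ^ 2), mul_div_mul_comm]
      rw [h1]
      have heq2 : s + Q (n+1) - (s + Q n) = Q (n+1) - Q n := by ring
      rw [heq2] at hk
      have h2 : 9 * (a (n+1)) ^ 2 / h ^ 2 *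
            ((Q (n+1) - Q n) / ((s + Q (n+1)) * (1 + Real.log ((s + Q (n+1)) / s)) ^ 2))
          ≤ 9 * (a (n+1)) ^ 2 / h ^ 2 * (g n - g (n+1)) := by
        exact mul_le_mul_of_nonneg_left hk (by positivity)
      have h3 : 9 * (a n) ^ 2 / h ^ 2 * (1 - g n) ≤ 9 * (a (n+1)) ^ 2 / h ^ 2 * (1 - g n) := by
        apply mul_le_mul_of_nonneg_right _ (by linarith [(hg01 n).2])
        have := hapos n
        apply div_le_div_of_nonneg_right _ (by positivity)
        nlinarith
      calc _ ≤ 9 * (a (n+1)) ^ 2 / h ^ 2 * (1 - g n) +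
              9 * (a (n+1)) ^ 2 / h ^ 2 * (g n - g (n+1)) :=
              add_le_add (le_trans ih h3) h2
        _ = 9 * (a (n+1)) ^ 2 / h ^ 2 * (1 - g (n+1)) := by ring
  calc _ ≤ 9 * (a t) ^ 2 / h ^ 2 * (1 - g t) := main t
    _ ≤ 9 * (a t) ^ 2 / h ^ 2 * 1 :=
        mul_le_mul_of_nonneg_left (by linarith [(hg01 t).1]) (by positivity)
    _ = 9 * (a t) ^ 2 / h ^ 2 := by ring
end
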